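/- (Consistency of the stacked linear localization system.) Under the geometric model, the true parameters satisfy the per-path linear equations used in the least-squares localization: for the LOS path, p_UE + c·τ_B·f_{1,rx} = p_BS + c·τ_1·f_{1,rx}; and for each NLOS path l ≥ 2, p_UE + c·τ_B·f_{l,rx} + d_l·(f_{l,rx} − f_{l,tx}) = p_BS + c·τ_l·f_{l,rx}. Hence the vector v = (p_UE, τ_B, d_2, …, d_L) ∈ ℝ^{L+2} is an exact solution of the stacked 2L-equation linear system B·v = z built from the AOAs, AODs and TOAs of the L paths. -/

import Mathlib

/-!
Every leg of a path is its length times its unit direction, `‖x‖ • normalize x = x`, and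
`c τ - c τ_B` is the total length of the path. Each block equation is a linear combination of
these leg identities: one leg for the LOS path, two (BS to scatterer, scatterer to UE) for an
NLOS path.
-/

open NormedSpace

section UnitDirection

variable {V : Type*} [NormedAddCommGroup V] [NormedSpace ℝ V]

theorem add_norm_smul_normalize_sub (p q : V) : p + ‖q - p‖ • normalize (q - p) = q := by
  rw [norm_smul_normalize, add_sub_cancel]

theorem mul_div_add_of_ne_zero {c : ℝ} (hc : c ≠ 0) (r τB : ℝ) :
    c * (r / c + τB) = r + c * τB := by
  field_simp

theorem los_block_eq {c : ℝ} (hc : c ≠ 0) (pBS pUE : V) (τB : ℝ) :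
    pUE + (c * τB) • normalize (pUE - pBS) =
      pBS + (c * (‖pBS - pUE‖ / c + τB)) • normalize (pUE - pBS) := by
  have hUE := add_norm_smul_normalize_sub pBS pUE
  rw [mul_div_add_of_ne_zero hc, norm_sub_rev]
  linear_combination (norm := module) -hUE

theorem nlos_block_eq {c : ℝ} (hc : c ≠ 0) (pBS pUE s : V) (τB : ℝ) :
    pUE + (c * τB) • normalize (pUE - s) +
        ‖pBS - s‖ • (normalize (pUE - s) - normalize (s - pBS)) =
      pBS + (c * ((‖pBS - s‖ + ‖pUE - s‖) / c + τB)) • normalize (pUE - s) := by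
  have hs := add_norm_smul_normalize_sub pBS s
  have hUE := add_norm_smul_normalize_sub s pUE
  rw [mul_div_add_of_ne_zero hc, norm_sub_rev pBS s]
  linear_combination (norm := module) -hs - hUE

end UnitDirection

theorem stacked_localization_consistency_general
    (L : ℕ)
    (pBS pUE : EuclideanSpace ℝ (Fin 2))
    (scat : Fin L → EuclideanSpace ℝ (Fin 2))
    (c τB : ℝ) (hc : 0 < c)
    (d : Fin L → ℝ) (hd : ∀ l : Fin L, d l = ‖pBS - scat l‖)
    (τ : Fin L → ℝ)
    (hτ0 : ∀ l : Fin L, l.val = 0 → τ l = ‖pBS - pUE‖ / c + τB)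
    (hτ : ∀ l : Fin L, l.val ≠ 0 →
      τ l = (‖pBS - scat l‖ + ‖pUE - scat l‖) / c + τB)
    (frx : Fin L → EuclideanSpace ℝ (Fin 2))
    (hfrx0 : ∀ l : Fin L, l.val = 0 → frx l = ‖pUE - pBS‖⁻¹ • (pUE - pBS))
    (hfrx : ∀ l : Fin L, l.val ≠ 0 → frx l = ‖pUE - scat l‖⁻¹ • (pUE - scat l))
    (ftx : Fin L → EuclideanSpace ℝ (Fin 2))
    (hftx : ∀ l : Fin L, l.val ≠ 0 → ftx l = ‖scat l - pBS‖⁻¹ • (scat l - pBS)) :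
    (∀ l : Fin L, l.val = 0 →
      pUE + (c * τB) • frx l = pBS + (c * τ l) • frx l) ∧
    (∀ l : Fin L, l.val ≠ 0 →
      pUE + (c * τB) • frx l + d l • (frx l - ftx l) = pBS + (c * τ l) • frx l) := by
  refine ⟨fun l hl => ?_, fun l hl => ?_⟩
  · rw [hτ0 l hl, hfrx0 l hl]
    exact los_block_eq hc.ne' pBS pUE τB
  · rw [hτ l hl, hfrx l hl, hftx l hl, hd l]
    exact nlos_block_eq hc.ne' pBS pUE (scat l) τB

/-- Consistency of the stacked linear localization system: under the geometric
model (path `0` is LOS, paths `l ≠ 0` are single-bounce NLOS with scatterer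
`scat l`, direction vectors given as the unit vectors of the context), the true
parameters satisfy every per-path 2-dimensional block equation of the stacked
`2L`-equation linear system `B v = z`: for the LOS path,
`p_UE + c τ_B f_{1,rx} = p_BS + c τ_1 f_{1,rx}`, and for each NLOS path `l`,
`p_UE + c τ_B f_{l,rx} + d_l (f_{l,rx} − f_{l,tx}) = p_BS + c τ_l f_{l,rx}`.
Hence `v = (p_UE, τ_B, d_2, …, d_L)` solves the stacked system exactly. -/
theorem stacked_localization_consistency
    (L : ℕ) (hL : 0 < L)
    (pBS pUE : EuclideanSpace ℝ (Fin 2))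
    (scat : Fin L → EuclideanSpace ℝ (Fin 2))
    (c τB : ℝ) (hc : 0 < c)
    (hne : pUE ≠ pBS)
    (hscat : ∀ l : Fin L, l.val ≠ 0 → scat l ≠ pBS ∧ scat l ≠ pUE)
    (d : Fin L → ℝ) (hd : ∀ l : Fin L, d l = ‖pBS - scat l‖)
    (τ : Fin L → ℝ)
    (hτ0 : ∀ l : Fin L, l.val = 0 → τ l = ‖pBS - pUE‖ / c + τB)
    (hτ : ∀ l : Fin L, l.val ≠ 0 →
      τ l = (‖pBS - scat l‖ + ‖pUE - scat l‖) / c + τB)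
    (frx : Fin L → EuclideanSpace ℝ (Fin 2))
    (hfrx0 : ∀ l : Fin L, l.val = 0 → frx l = ‖pUE - pBS‖⁻¹ • (pUE - pBS))
    (hfrx : ∀ l : Fin L, l.val ≠ 0 → frx l = ‖pUE - scat l‖⁻¹ • (pUE - scat l))
    (ftx : Fin L → EuclideanSpace ℝ (Fin 2))
    (hftx : ∀ l : Fin L, l.val ≠ 0 → ftx l = ‖scat l - pBS‖⁻¹ • (scat l - pBS)) :
    (∀ l : Fin L, l.val = 0 →
      pUE + (c * τB) • frx l = pBS + (c * τ l) • frx l) ∧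
    (∀ l : Fin L, l.val ≠ 0 →
      pUE + (c * τB) • frx l + d l • (frx l - ftx l) = pBS + (c * τ l) • frx l) :=
  stacked_localization_consistency_general L pBS pUE scat c τB hc d hd τ hτ0 hτ frx hfrx0 hfrx ftx
    hftx
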